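/- The merge and insert operators anticommute: the ℤ-linear maps ∂_M, ∂_I : ℤ[Ω] → ℤ[Ω] satisfy ∂_M ∘ ∂_I + ∂_I ∘ ∂_M = 0. -/
import Mathlib

/-!
Compositions (finite lists of positive integers) and the merge/insert operators
on the free ℤ-module with basis the set Ω of all compositions.
-/

/-- The merge operation `M_k` (0-indexed): merge the adjacent entries at
positions `k` and `k+1` into a single entry equal to their sum. -/
def mergeAt (ω : List ℕ+) (k : ℕ) : List ℕ+ :=
  ω.take k ++ (ω.getD k 1 + ω.getD (k + 1) 1) :: ω.drop (k + 2)

/-- The insert operation `I_k`: insert a new entry `2` immediately after the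
first `k` entries. -/
def insertAt2 (ω : List ℕ+) (k : ℕ) : List ℕ+ :=
  ω.take k ++ (2 : ℕ+) :: ω.drop k

/-- The merge differential `∂_M` on `ℤ[Ω]`, defined on a basis element `ω` of
length `s` by `∂_M(ω) = −Σ_{k=1}^{s−1} (−1)^k M_k(ω)`; in the 0-indexed
convention this is `Σ_{k=0}^{s−2} (−1)^k (merge at k)`. -/
noncomputable def dM : (List ℕ+ →₀ ℤ) →ₗ[ℤ] (List ℕ+ →₀ ℤ) :=
  Finsupp.lsum ℤ fun ω => LinearMap.toSpanSingleton ℤ _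
    (∑ k ∈ Finset.range (ω.length - 1),
      ((-1 : ℤ) ^ k) • Finsupp.single (mergeAt ω k) (1 : ℤ))

/-- The insert differential `∂_I` on `ℤ[Ω]`, defined on a basis element `ω` of
length `s` by `∂_I(ω) = Σ_{k=0}^{s} (−1)^k I_k(ω)`. -/
noncomputable def dI : (List ℕ+ →₀ ℤ) →ₗ[ℤ] (List ℕ+ →₀ ℤ) :=
  Finsupp.lsum ℤ fun ω => LinearMap.toSpanSingleton ℤ _
    (∑ k ∈ Finset.range (ω.length + 1),
      ((-1 : ℤ) ^ k) • Finsupp.single (insertAt2 ω k) (1 : ℤ))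

/-! ### Auxiliary operators -/

/-- Prepend `a` to a composition, extended linearly. -/
noncomputable def Fmap (a : ℕ+) : (List ℕ+ →₀ ℤ) →ₗ[ℤ] (List ℕ+ →₀ ℤ) :=
  Finsupp.lmapDomain ℤ ℤ (a :: ·)

/-- Merge `a` into the head of a composition (0 for the empty composition),
extended linearly. -/
noncomputable def Hmap (a : ℕ+) : (List ℕ+ →₀ ℤ) →ₗ[ℤ] (List ℕ+ →₀ ℤ) :=
  Finsupp.lsum ℤ fun ω => LinearMap.toSpanSingleton ℤ _
    (match ω with
      | [] => 0
      | b :: u => Finsupp.single ((a + b) :: u) (1 : ℤ))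

/-- Basis element. -/
noncomputable def eb (t : List ℕ+) : List ℕ+ →₀ ℤ := Finsupp.single t 1

lemma lsingle_eb (t : List ℕ+) : (Finsupp.lsingle t : ℤ →ₗ[ℤ] (List ℕ+ →₀ ℤ)) 1 = eb t := rfl

lemma Fmap_single (a : ℕ+) (t : List ℕ+) : Fmap a (eb t) = eb (a :: t) := by
  simp [Fmap, eb, Finsupp.lmapDomain_apply, Finsupp.mapDomain_single]

lemma Hmap_nil (a : ℕ+) : Hmap a (eb []) = 0 := by
  simp [Hmap, eb, Finsupp.lsum_single]

lemma Hmap_cons (a b : ℕ+) (u : List ℕ+) : Hmap a (eb (b :: u)) = eb ((a + b) :: u) := by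
  simp [Hmap, eb, Finsupp.lsum_single]

lemma Hmap_comp_Fmap (a b : ℕ+) : (Hmap a).comp (Fmap b) = Fmap (a + b) := by
  apply Finsupp.lhom_ext'
  intro t
  apply LinearMap.ext_ring
  simp only [LinearMap.comp_apply, lsingle_eb]
  simp [Fmap_single, Hmap_cons]

lemma insertAt2_cons (c : ℕ+) (u : List ℕ+) (k : ℕ) :
    insertAt2 (c :: u) (k + 1) = c :: insertAt2 u k := by
  simp [insertAt2]

lemma mergeAt_cons (c : ℕ+) (u : List ℕ+) (k : ℕ) :
    mergeAt (c :: u) (k + 1) = c :: mergeAt u k := by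
  simp [mergeAt]

lemma dI_single (ω : List ℕ+) :
    dI (eb ω) = ∑ k ∈ Finset.range (ω.length + 1),
      ((-1 : ℤ) ^ k) • eb (insertAt2 ω k) := by
  simp [dI, eb, Finsupp.lsum_single]

lemma dM_single (ω : List ℕ+) :
    dM (eb ω) = ∑ k ∈ Finset.range (ω.length - 1),
      ((-1 : ℤ) ^ k) • eb (mergeAt ω k) := by
  simp [dM, eb, Finsupp.lsum_single]

lemma dI_cons (c : ℕ+) (u : List ℕ+) :
    dI (eb (c :: u)) = eb ((2 : ℕ+) :: c :: u) - Fmap c (dI (eb u)) := by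
  rw [dI_single, dI_single]
  rw [show (c :: u).length + 1 = (u.length + 1) + 1 from rfl]
  rw [Finset.sum_range_succ']
  simp only [pow_zero, one_smul]
  rw [show insertAt2 (c :: u) 0 = (2 : ℕ+) :: c :: u from rfl]
  rw [map_sum]
  have : ∀ k, ((-1 : ℤ) ^ (k + 1)) • eb (insertAt2 (c :: u) (k + 1))
      = -(((-1 : ℤ) ^ k) • Fmap c (eb (insertAt2 u k))) := by
    intro k
    rw [Fmap_single, insertAt2_cons, pow_succ]
    module
  rw [Finset.sum_congr rfl fun k _ => this k]
  simp only [map_smul, Finset.sum_neg_distrib]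
  abel

lemma dM_cons (c : ℕ+) (u : List ℕ+) :
    dM (eb (c :: u)) = Hmap c (eb u) - Fmap c (dM (eb u)) := by
  cases u with
  | nil =>
    rw [dM_single, dM_single, Hmap_nil]
    simp
  | cons b v =>
    rw [dM_single, dM_single, Hmap_cons]
    rw [show (c :: b :: v).length - 1 = (b :: v).length - 1 + 1 by simp]
    rw [Finset.sum_range_succ']
    simp only [pow_zero, one_smul]
    have h0 : mergeAt (c :: b :: v) 0 = (c + b) :: v := by simp [mergeAt]
    rw [h0, map_sum]
    have : ∀ k, ((-1 : ℤ) ^ (k + 1)) • eb (mergeAt (c :: b :: v) (k + 1))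
        = -(((-1 : ℤ) ^ k) • Fmap c (eb (mergeAt (b :: v) k))) := by
      intro k
      rw [Fmap_single, mergeAt_cons, pow_succ]
      module
    rw [Finset.sum_congr rfl fun k _ => this k]
    simp only [map_smul, Finset.sum_neg_distrib]
    abel

lemma dI_Fmap (c : ℕ+) (x : List ℕ+ →₀ ℤ) :
    dI (Fmap c x) = Fmap 2 (Fmap c x) - Fmap c (dI x) := by
  have : dI.comp (Fmap c) = (Fmap 2).comp (Fmap c) - (Fmap c).comp dI := by
    apply Finsupp.lhom_ext'
    intro t
    apply LinearMap.ext_ring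
    simp only [LinearMap.comp_apply, LinearMap.sub_apply, lsingle_eb]
    rw [Fmap_single, dI_cons, Fmap_single]
  have h := LinearMap.congr_fun this x
  simpa using h

lemma dM_Fmap (c : ℕ+) (x : List ℕ+ →₀ ℤ) :
    dM (Fmap c x) = Hmap c x - Fmap c (dM x) := by
  have : dM.comp (Fmap c) = Hmap c - (Fmap c).comp dM := by
    apply Finsupp.lhom_ext'
    intro t
    apply LinearMap.ext_ring
    simp only [LinearMap.comp_apply, LinearMap.sub_apply, lsingle_eb]
    rw [Fmap_single, dM_cons]
  have h := LinearMap.congr_fun this x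
  simpa using h

lemma dI_nil : dI (eb ([] : List ℕ+)) = eb [(2 : ℕ+)] := by
  rw [dI_single]
  simp [insertAt2]

lemma dI_Hmap (a : ℕ+) (x : List ℕ+ →₀ ℤ) :
    dI (Hmap a x) = Fmap 2 (Hmap a x) + Hmap a (dI x) - Fmap (2 + a) x := by
  have : dI.comp (Hmap a) = (Fmap 2).comp (Hmap a) + (Hmap a).comp dI - Fmap (2 + a) := by
    apply Finsupp.lhom_ext'
    intro t
    apply LinearMap.ext_ring
    simp only [LinearMap.comp_apply, LinearMap.sub_apply, LinearMap.add_apply, lsingle_eb]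
    cases t with
    | nil =>
      rw [Hmap_nil, Fmap_single, dI_nil]
      simp only [map_zero]
      rw [Hmap_cons]
      have : a + 2 = 2 + a := by rw [add_comm]
      rw [this]
      abel
    | cons b u =>
      rw [Hmap_cons, dI_cons, dI_cons, Fmap_single, Fmap_single, map_sub, Hmap_cons]
      have hHF := LinearMap.congr_fun (Hmap_comp_Fmap a b) (dI (eb u))
      simp only [LinearMap.comp_apply] at hHF
      rw [hHF]
      have : a + 2 = 2 + a := by rw [add_comm]
      rw [this]
      abel
  have h := LinearMap.congr_fun this x
  simpa using h

lemma key (t : List ℕ+) : dM (dI (eb t)) + dI (dM (eb t)) = 0 := by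
  induction t with
  | nil =>
    rw [dI_nil, dM_single, dM_single]
    simp
  | cons a t ih =>
    rw [dI_cons, dM_cons]
    rw [map_sub, map_sub]
    rw [dM_cons, Hmap_cons, dM_cons]
    rw [dM_Fmap a (dI (eb t)), dI_Fmap a (dM (eb t)), dI_Hmap a (eb t)]
    have h2a : Fmap (2 + a) (eb t) = eb ((2 + a) :: t) := Fmap_single _ _
    rw [h2a]
    have hmap := congrArg (Fmap a) ih
    rw [map_add, map_zero] at hmap
    simp only [map_sub]
    linear_combination (norm := abel) hmap

/-- the merge and insert operators anticommute:
`∂_M ∘ ∂_I + ∂_I ∘ ∂_M = 0`. -/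
theorem merge_insert_anticommute : dM.comp dI + dI.comp dM = 0 := by
  apply Finsupp.lhom_ext'
  intro t
  apply LinearMap.ext_ring
  simp only [LinearMap.add_apply, LinearMap.comp_apply, LinearMap.zero_apply, lsingle_eb]
  simpa using key t
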